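/- Restricted Stanley theorem: Let (P,ω) be a finite labeled poset and ρ : P → ℤ_{>0} any restriction. Then the set of (P,ω,ρ)-partitions is the disjoint union, over all linear extensions L of P, of the sets of (L,ω,ρ)-partitions; that is, every (P,ω,ρ)-partition is an (L,ω,ρ)-partition for exactly one linear extension L of P, and conversely every (L,ω,ρ)-partition, for L a linear extension of P, is a (P,ω,ρ)-partition. -/

import Mathlib

/-- The cover relation of a relation `r` (thought of as the non-strict order relation):
`v` covers `u` if `u < v` and nothing lies strictly between. -/
def RelCovBy {P : Type*} (r : P → P → Prop) (u v : P) : Prop :=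
  r u v ∧ u ≠ v ∧ ∀ w, r u w → r w v → w = u ∨ w = v

/-- `r` is (the non-strict relation of) a linear extension of the partial order on `P`. -/
def IsLinExt {P : Type*} [PartialOrder P] (r : P → P → Prop) : Prop :=
  IsLinearOrder P r ∧ ∀ u v : P, u ≤ v → r u v

/-- `f : P → ℤ_{>0}` is a `(P,ω,ρ)`-partition with respect to the order relation `r`:
for every cover `u ⋖ v` of `r` one has `f u ≥ f v`, with moreover `f u > f v`
whenever `ω u > ω v`, and `f u ≤ ρ u` for all `u`. -/
def IsRestPart {P : Type*} [Fintype P] (r : P → P → Prop)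
    (ω : P ≃ Fin (Fintype.card P)) (ρ : P → ℕ+) (f : P → ℕ+) : Prop :=
  (∀ u v : P, RelCovBy r u v → f v ≤ f u ∧ (ω v < ω u → f v < f u)) ∧
  ∀ u : P, f u ≤ ρ u

/-!
Encode a pair `(f, ω)` by the key `u ↦ (f u, ω u)`, ordered lexicographically with `f`
decreasing and `ω` increasing; since `ω` is injective, so is the key. On a pair `u ≠ v`, the
`(P,ω)`-partition condition for `u ⋖ v` says exactly that the key increases from `u` to `v`.
In a finite order a function strictly increasing along covers is strictly monotone, so:
an `(L,ω)`-partition is one for every order below `L` (in particular for `P`), and a linear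
order `L` admits `f` as an `(L,ω)`-partition iff `L` is the order pulled back along the key.
For a `(P,ω)`-partition that pulled-back order extends `P`, and it is the only candidate.
-/

open Function OrderDual

section RelCovBy

variable {P : Type*} {r : P → P → Prop}

lemma relCovBy_le_iff_covBy [PartialOrder P] {u v : P} : RelCovBy (· ≤ ·) u v ↔ u ⋖ v := by
  rw [covBy_iff_lt_and_eq_or_eq, lt_iff_le_and_ne]
  exact and_assoc.symm

lemma lt_of_forall_relCovBy [Finite P] [IsPartialOrder P r] {β : Type*} [Preorder β]
    {g : P → β} (hg : ∀ u v, RelCovBy r u v → g u < g v) {u v : P} (huv : r u v)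
    (hne : u ≠ v) : g u < g v := by
  classical
  let : PartialOrder P :=
    { le := r
      le_refl := refl_of r
      le_trans := fun _ _ _ => trans_of r
      le_antisymm := fun _ _ => antisymm_of r }
  have := Fintype.ofFinite P
  let : LocallyFiniteOrder P := Fintype.toLocallyFiniteOrder
  exact (strictMono_iff_forall_covBy g).2 (fun a b h => hg a b (relCovBy_le_iff_covBy.2 h))
    (lt_of_le_of_ne huv hne)

lemma rel_iff_of_forall_relCovBy [Finite P] [IsLinearOrder P r] {β : Type*} [PartialOrder β]
    {g : P → β} (hinj : Injective g) (hg : ∀ u v, RelCovBy r u v → g u < g v) {u v : P} :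
    r u v ↔ g u ≤ g v := by
  have hmono : ∀ {a b}, r a b → g a ≤ g b := fun {a b} hab => by
    rcases eq_or_ne a b with rfl | hne
    · exact le_rfl
    · exact (lt_of_forall_relCovBy hg hab hne).le
  refine ⟨hmono, fun hle => ?_⟩
  rcases total_of r u v with huv | hvu
  · exact huv
  · rw [hinj (le_antisymm hle (hmono hvu))]
    exact refl_of r v

end RelCovBy

section PartitionKey

variable {P α ι : Type*} (f : P → α) (ω : P → ι)

def partitionKey (u : P) : αᵒᵈ ×ₗ ι := toLex (toDual (f u), ω u)

variable {f ω}

lemma partitionKey_injective (hω : Injective ω) : Injective (partitionKey f ω) :=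
  fun _ _ h => hω (congrArg (fun k => (ofLex k).2) h)

variable [LinearOrder α] [LinearOrder ι]

lemma partitionKey_lt_partitionKey_iff {u v : P} (hne : ω u ≠ ω v) :
    partitionKey f ω u < partitionKey f ω v ↔ f v ≤ f u ∧ (ω v < ω u → f v < f u) := by
  simp only [partitionKey, Prod.Lex.toLex_lt_toLex, toDual_lt_toDual, toDual_inj]
  grind

lemma isLinearOrder_partitionKey (hω : Injective ω) :
    IsLinearOrder P (partitionKey f ω · ≤ partitionKey f ω ·) where
  refl _ := le_rfl
  trans _ _ _ := le_trans
  antisymm _ _ h h' := partitionKey_injective hω (le_antisymm h h')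
  total _ _ := le_total _ _

end PartitionKey

section RestrictedPartition

variable {P : Type*} [Fintype P] {r : P → P → Prop} {ω : P ≃ Fin (Fintype.card P)}
  {ρ : P → ℕ+} {f : P → ℕ+}

lemma isRestPart_iff :
    IsRestPart r ω ρ f ↔
      (∀ u v, RelCovBy r u v → partitionKey f ω u < partitionKey f ω v) ∧ ∀ u, f u ≤ ρ u := by
  refine and_congr_left' (forall₂_congr fun u v => forall_congr' fun huv => ?_)
  exact (partitionKey_lt_partitionKey_iff (ω.injective.ne huv.2.1)).symm

lemma isRestPart_iff_eq_partitionKey [IsLinearOrder P r] :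
    IsRestPart r ω ρ f ↔ r = (partitionKey f ω · ≤ partitionKey f ω ·) ∧ ∀ u, f u ≤ ρ u := by
  have hinj := partitionKey_injective (f := f) ω.injective
  rw [isRestPart_iff]
  refine and_congr_left' ⟨fun hg => ?_, ?_⟩
  · ext u v
    exact rel_iff_of_forall_relCovBy hinj hg
  · rintro rfl u v ⟨hle, hne, -⟩
    exact lt_of_le_of_ne hle (hinj.ne hne)

lemma IsRestPart.of_isLinExt [PartialOrder P] (hr : IsLinExt r) (hf : IsRestPart r ω ρ f) :
    IsRestPart (· ≤ ·) ω ρ f := by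
  obtain ⟨hlin, hext⟩ := hr
  obtain ⟨hkey, hρ⟩ := isRestPart_iff.1 hf
  exact isRestPart_iff.2
    ⟨fun u v huv => lt_of_forall_relCovBy hkey (hext u v huv.1) huv.2.1, hρ⟩

lemma IsRestPart.isLinExt_partitionKey [PartialOrder P] (hf : IsRestPart (· ≤ ·) ω ρ f) :
    IsLinExt (partitionKey f ω · ≤ partitionKey f ω ·) := by
  refine ⟨isLinearOrder_partitionKey ω.injective, fun u v huv => ?_⟩
  rcases eq_or_ne u v with rfl | hne
  · exact le_rfl
  · exact (lt_of_forall_relCovBy (isRestPart_iff.1 hf).1 huv hne).le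

end RestrictedPartition

/-- **Restricted Stanley theorem** (Assaf–Bergeron): for any restriction `ρ`, every
`(L,ω,ρ)`-partition for a linear extension `L` of `P` is a `(P,ω,ρ)`-partition, and
every `(P,ω,ρ)`-partition is an `(L,ω,ρ)`-partition for exactly one linear
extension `L` of `P`. -/
theorem restricted_stanley {P : Type*} [Fintype P] [PartialOrder P]
    (ω : P ≃ Fin (Fintype.card P)) (ρ : P → ℕ+) (f : P → ℕ+) :
    (∀ r : P → P → Prop, IsLinExt r → IsRestPart r ω ρ f → IsRestPart (· ≤ ·) ω ρ f) ∧
    (IsRestPart (· ≤ ·) ω ρ f → ∃! r : P → P → Prop, IsLinExt r ∧ IsRestPart r ω ρ f) := by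
  refine ⟨fun r hr hf => hf.of_isLinExt hr, fun hf => ?_⟩
  have := isLinearOrder_partitionKey (f := f) ω.injective
  refine ⟨_, ⟨hf.isLinExt_partitionKey, isRestPart_iff_eq_partitionKey.2 ⟨rfl, hf.2⟩⟩, ?_⟩
  rintro r ⟨⟨hlin, -⟩, hr⟩
  exact (isRestPart_iff_eq_partitionKey.1 hr).1
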